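/- The GL_N Yang R-matrix R^ℏ(z) := ℏ⁻¹·(1_N⊗1_N) + z⁻¹·P₁₂ satisfies the associative Yang–Baxter equation: for all ℏ, η, z₁, z₂, z₃ ∈ ℂ with ℏ ≠ 0, η ≠ 0, ℏ ≠ η, z₁ ≠ z₂, z₂ ≠ z₃, z₁ ≠ z₃, one has R^ℏ_{12}(z₁−z₂) R^η_{23}(z₂−z₃) = R^η_{13}(z₁−z₃) R^{ℏ−η}_{12}(z₁−z₂) + R^{η−ℏ}_{23}(z₂−z₃) R^ℏ_{13}(z₁−z₃) in Mat_N(ℂ)^{⊗3}. -/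
import Mathlib


open Matrix Kronecker BigOperators

/-- The permutation operator `P₁₂ = Σ_{i,j} e_{ij} ⊗ e_{ji}` on `ℂ^N ⊗ ℂ^N`. -/
def Perm (N : ℕ) : Matrix (Fin N × Fin N) (Fin N × Fin N) ℂ :=
  Matrix.of fun p q => if p.1 = q.2 ∧ p.2 = q.1 then 1 else 0

/-- Embedding `X ↦ X₁₂` of `Mat_N ⊗ Mat_N` into the tensor factors 1,2 of `Mat_N^{⊗3}`. -/
def e12 {N : ℕ} (X : Matrix (Fin N × Fin N) (Fin N × Fin N) ℂ) :
    Matrix (Fin N × Fin N × Fin N) (Fin N × Fin N × Fin N) ℂ :=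
  Matrix.of fun p q =>
    X (p.1, p.2.1) (q.1, q.2.1) * (if p.2.2 = q.2.2 then (1 : ℂ) else 0)

/-- Embedding `X ↦ X₁₃` of `Mat_N ⊗ Mat_N` into the tensor factors 1,3 of `Mat_N^{⊗3}`. -/
def e13 {N : ℕ} (X : Matrix (Fin N × Fin N) (Fin N × Fin N) ℂ) :
    Matrix (Fin N × Fin N × Fin N) (Fin N × Fin N × Fin N) ℂ :=
  Matrix.of fun p q =>
    X (p.1, p.2.2) (q.1, q.2.2) * (if p.2.1 = q.2.1 then (1 : ℂ) else 0)

/-- Embedding `X ↦ X₂₃` of `Mat_N ⊗ Mat_N` into the tensor factors 2,3 of `Mat_N^{⊗3}`. -/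
def e23 {N : ℕ} (X : Matrix (Fin N × Fin N) (Fin N × Fin N) ℂ) :
    Matrix (Fin N × Fin N × Fin N) (Fin N × Fin N × Fin N) ℂ :=
  Matrix.of fun p q =>
    X (p.2.1, p.2.2) (q.2.1, q.2.2) * (if p.1 = q.1 then (1 : ℂ) else 0)


/-- The `GL_N` Yang `R`-matrix `R^ℏ(z) = ℏ⁻¹·1_N⊗1_N + z⁻¹·P₁₂`. -/
noncomputable def yangR (N : ℕ) (ℏ z : ℂ) : Matrix (Fin N × Fin N) (Fin N × Fin N) ℂ :=
  ℏ⁻¹ • (1 : Matrix (Fin N × Fin N) (Fin N × Fin N) ℂ) + z⁻¹ • Perm N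

def Cyc (N : ℕ) : Matrix (Fin N × Fin N × Fin N) (Fin N × Fin N × Fin N) ℂ :=
  Matrix.of fun p q => if p.1 = q.2.2 ∧ p.2.1 = q.1 ∧ p.2.2 = q.2.1 then 1 else 0

lemma e12_one {N : ℕ} : e12 (1 : Matrix (Fin N × Fin N) (Fin N × Fin N) ℂ) = 1 := by
  ext p q; simp [e12, Matrix.one_apply, Prod.ext_iff]; aesop
lemma e13_one {N : ℕ} : e13 (1 : Matrix (Fin N × Fin N) (Fin N × Fin N) ℂ) = 1 := by
  ext p q; simp [e13, Matrix.one_apply, Prod.ext_iff]; aesop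
lemma e23_one {N : ℕ} : e23 (1 : Matrix (Fin N × Fin N) (Fin N × Fin N) ℂ) = 1 := by
  ext p q; simp [e23, Matrix.one_apply, Prod.ext_iff]; aesop

lemma p12p23 {N : ℕ} : e12 (Perm N) * e23 (Perm N) = Cyc N := by
  ext p q
  simp [e12, e23, Perm, Cyc, Matrix.mul_apply, Fintype.sum_prod_type, ite_and]
  split_ifs <;> simp_all
lemma p13p12 {N : ℕ} : e13 (Perm N) * e12 (Perm N) = Cyc N := by
  ext p q
  simp [e13, e12, Perm, Cyc, Matrix.mul_apply, Fintype.sum_prod_type, ite_and]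
  split_ifs <;> simp_all
lemma p23p13 {N : ℕ} : e23 (Perm N) * e13 (Perm N) = Cyc N := by
  ext p q
  simp [e23, e13, Perm, Cyc, Matrix.mul_apply, Fintype.sum_prod_type, ite_and]

lemma e12_lin {N : ℕ} (a b : ℂ) (X Y : Matrix (Fin N × Fin N) (Fin N × Fin N) ℂ) :
    e12 (a • X + b • Y) = a • e12 X + b • e12 Y := by
  ext p q; simp [e12]; split_ifs <;> ring
lemma e13_lin {N : ℕ} (a b : ℂ) (X Y : Matrix (Fin N × Fin N) (Fin N × Fin N) ℂ) :
    e13 (a • X + b • Y) = a • e13 X + b • e13 Y := by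
  ext p q; simp [e13]; split_ifs <;> ring
lemma e23_lin {N : ℕ} (a b : ℂ) (X Y : Matrix (Fin N × Fin N) (Fin N × Fin N) ℂ) :
    e23 (a • X + b • Y) = a • e23 X + b • e23 Y := by
  ext p q; simp [e23]; split_ifs <;> ring

/-- Yang's `R`-matrix satisfies the associative Yang–Baxter equation. -/
theorem yang_AYBE (N : ℕ) (hN : 1 ≤ N) (ℏ η z₁ z₂ z₃ : ℂ)
    (hℏ : ℏ ≠ 0) (hη : η ≠ 0) (hℏη : ℏ ≠ η)
    (h12 : z₁ ≠ z₂) (h23 : z₂ ≠ z₃) (h13 : z₁ ≠ z₃) :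
    e12 (yangR N ℏ (z₁ - z₂)) * e23 (yangR N η (z₂ - z₃)) =
      e13 (yangR N η (z₁ - z₃)) * e12 (yangR N (ℏ - η) (z₁ - z₂)) +
        e23 (yangR N (η - ℏ) (z₂ - z₃)) * e13 (yangR N ℏ (z₁ - z₃)) := by
  have hu : z₁ - z₂ ≠ 0 := sub_ne_zero.2 h12
  have hv : z₂ - z₃ ≠ 0 := sub_ne_zero.2 h23
  have hw : z₁ - z₃ ≠ 0 := sub_ne_zero.2 h13
  have hhe : ℏ - η ≠ 0 := sub_ne_zero.2 hℏη
  have heh : η - ℏ ≠ 0 := sub_ne_zero.2 (Ne.symm hℏη)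
  simp only [yangR, e12_lin, e13_lin, e23_lin, e12_one, e13_one, e23_one]
  simp only [add_mul, mul_add, smul_mul_assoc, mul_smul_comm, one_mul, mul_one,
    p12p23, p13p12, p23p13, smul_smul]
  match_scalars <;> field_simp <;> ring
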